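/- For all integers q ≥ 2, ∑_{n=1}^∞ H_n / (n(n+1)⋯(n+q−1)) = (1/(q−1)!)·[ζ(2) − ∑_{j=1}^{q−2} 1/j²]. -/

import Mathlib

/-- Generalized harmonic number `H_n^{(r)} = ∑_{j=1}^n 1/j^r`. -/
noncomputable def H (n r : ℕ) : ℝ := ∑ j ∈ Finset.range n, (1 : ℝ) / (j + 1) ^ r

/-- Riemann zeta value `ζ(s) = ∑_{n=1}^∞ 1/n^s` (as a real series). -/
noncomputable def Z (s : ℕ) : ℝ := ∑' n : ℕ, (1 : ℝ) / (n + 1) ^ s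

/-- Double zeta value `ζ(a,b) = ∑_{m>n≥1} 1/(m^a n^b)`. -/
noncomputable def Z2 (a b : ℕ) : ℝ :=
  ∑' m : ℕ, (∑ j ∈ Finset.range m, (1 : ℝ) / (j + 1) ^ b) / (m + 1) ^ a

open Finset Filter

noncomputable def P (m : ℕ) (x : ℝ) : ℝ := ∏ i ∈ Finset.range m, (x + 1 + i)

lemma P_succ (m : ℕ) (x : ℝ) : P (m+1) x = P m x * (x + 1 + m) := Finset.prod_range_succ _ _

lemma P_succ' (m : ℕ) (x : ℝ) : P (m+1) x = (x + 1) * P m (x+1) := by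
  rw [P, Finset.prod_range_succ']
  rw [mul_comm]
  congr 1
  · push_cast; ring
  · apply Finset.prod_congr rfl; intro i _; push_cast; ring

lemma P_pos {x : ℝ} (hx : 0 ≤ x) (m : ℕ) : 0 < P m x := by
  apply Finset.prod_pos; intro i _; positivity

lemma one_le_P {x : ℝ} (hx : 0 ≤ x) (m : ℕ) : 1 ≤ P m x := by
  induction m with
  | zero => simp [P]
  | succ m ih => rw [P_succ]; nlinarith [ih, Nat.cast_nonneg (α := ℝ) m]

lemma P_mono {x : ℝ} (hx : 0 ≤ x) (m : ℕ) : P m x ≤ P m (x+1) := by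
  induction m with
  | zero => simp [P]
  | succ m ih =>
    rw [P_succ, P_succ]
    have h1 := P_pos hx m
    have h2 := P_pos (by linarith : (0:ℝ) ≤ x+1) m
    have : (0:ℝ) ≤ (m:ℝ) := Nat.cast_nonneg m
    nlinarith

lemma P_zero_eq (m : ℕ) : P m 0 = Nat.factorial m := by
  induction m with
  | zero => simp [P]
  | succ m ih => rw [P_succ, ih, Nat.factorial_succ]; push_cast; ring

lemma P_one_eq (m : ℕ) : P m 1 = Nat.factorial (m+1) := by
  have := P_succ' m 0
  rw [P_zero_eq] at this
  simpa using this.symm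


lemma H_succ (n : ℕ) : H (n+1) 1 = H n 1 + 1/((n:ℝ)+1) := by
  simp [H, Finset.sum_range_succ]

lemma H_nonneg (n : ℕ) : 0 ≤ H n 1 := by
  apply Finset.sum_nonneg; intro i _; positivity

lemma H_one : H 1 1 = 1 := by simp [H]

lemma H_le_sqrt (n : ℕ) : H n 1 ≤ 2 * Real.sqrt n := by
  induction n with
  | zero => simp [H]
  | succ n ih =>
    rw [H_succ]
    set s := Real.sqrt n with hsdef
    set t := Real.sqrt (n+1 : ℕ) with htdef
    have hs0 : 0 ≤ s := Real.sqrt_nonneg _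
    have ht0 : 0 ≤ t := Real.sqrt_nonneg _
    have hs : s^2 = n := Real.sq_sqrt (by positivity)
    have ht : t^2 = (n:ℝ)+1 := by
      rw [htdef]; push_cast; exact Real.sq_sqrt (by positivity)
    have ht1 : 1 ≤ t := by nlinarith
    have key : 1/((n:ℝ)+1) ≤ 2*(t - s) := by
      rw [div_le_iff₀ (by positivity : (0:ℝ) < (n:ℝ)+1)]
      nlinarith [sq_nonneg (t - s), sq_nonneg (t + s), mul_nonneg hs0 ht0]
    linarith

lemma summable_one_div_sq : Summable (fun n : ℕ => 1/((n:ℝ)+1)^2) := by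
  have h : Summable (fun n : ℕ => 1/((n:ℝ))^2) := Real.summable_one_div_nat_pow.mpr one_lt_two
  have := (summable_nat_add_iff 1).mpr h
  apply this.congr
  intro n; push_cast; ring

lemma summable_sqrt_div_sq : Summable (fun n : ℕ => 2 * Real.sqrt ((n:ℝ)+1) / ((n:ℝ)+1)^2) := by
  have h : Summable (fun n : ℕ => 1/((n:ℝ))^((3:ℝ)/2)) :=
    Real.summable_one_div_nat_rpow.mpr (by norm_num)
  have h2 := (summable_nat_add_iff 1).mpr h
  have h3 := h2.mul_left 2
  apply h3.congr
  intro n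
  have hx : (0:ℝ) < (n:ℝ)+1 := by positivity
  rw [Real.sqrt_eq_rpow]
  push_cast
  rw [show ((n:ℝ)+1)^2 = ((n:ℝ)+1)^((2:ℕ):ℝ) from (Real.rpow_natCast _ 2).symm]
  rw [mul_div_assoc, ← Real.rpow_sub hx, one_div, ← Real.rpow_neg hx.le]
  norm_num

lemma tsum_telescope' {c : ℕ → ℝ} (hs : Summable fun n => c n - c (n+1))
    (hc : Tendsto c atTop (nhds 0)) : ∑' n, (c n - c (n+1)) = c 0 := by
  have h1 := hs.hasSum.tendsto_sum_nat
  have h2 : ∀ n, ∑ i ∈ Finset.range n, (c i - c (i+1)) = c 0 - c n :=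
    fun n => Finset.sum_range_sub' c n
  have h3 : Tendsto (fun n => c 0 - c n) atTop (nhds (∑' n, (c n - c (n+1)))) := by
    simpa [h2] using h1
  have h4 : Tendsto (fun n => c 0 - c n) atTop (nhds (c 0 - 0)) :=
    tendsto_const_nhds.sub hc
  have := tendsto_nhds_unique h3 h4
  rw [this, sub_zero]

lemma summable_tele {e : ℕ → ℝ} (h0 : ∀ n, 0 ≤ e n) (hm : ∀ n, e (n+1) ≤ e n) :
    Summable fun n => e n - e (n+1) := by
  apply summable_of_sum_range_le (c := e 0)
  · intro n; simp [sub_nonneg, hm n]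
  · intro n
    rw [Finset.sum_range_sub' e n]
    linarith [h0 n]

noncomputable def g (m n : ℕ) : ℝ := 1 / (((n:ℝ)+1)^2 * P m ((n:ℝ)+1))
noncomputable def hh (m n : ℕ) : ℝ := 1 / (((n:ℝ)+1) * P m ((n:ℝ)+1))

lemma summable_g (m : ℕ) : Summable (g m) := by
  apply Summable.of_nonneg_of_le _ _ summable_one_div_sq
  · intro n
    have := P_pos (by positivity : (0:ℝ) ≤ (n:ℝ)+1) m
    unfold g; positivity
  · intro n
    unfold g
    have h1 := one_le_P (by positivity : (0:ℝ) ≤ (n:ℝ)+1) m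
    have h2 : (0:ℝ) < ((n:ℝ)+1)^2 := by positivity
    rw [div_le_div_iff₀ (by nlinarith) (by positivity)]
    nlinarith

-- telescoping for e n = 1/P m ((n:ℝ))  (values at integer points starting at 0)
lemma hh_tele (k n : ℕ) :
    hh (k+1) n = (1/((k:ℝ)+1)) * (1 / P (k+1) (n:ℝ) - 1 / P (k+1) ((n:ℝ)+1)) := by
  have hA : P (k+1) (n:ℝ) = ((n:ℝ)+1) * P k ((n:ℝ)+1) := P_succ' k n
  have hB : P (k+1) ((n:ℝ)+1) = P k ((n:ℝ)+1) * ((n:ℝ)+1+1+k) := P_succ k _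
  have hPk : (0:ℝ) < P k ((n:ℝ)+1) := P_pos (by positivity) k
  unfold hh
  rw [hA, hB]
  field_simp
  ring

lemma e_nonneg (m n : ℕ) : 0 ≤ 1 / P m (n:ℝ) := by
  have := P_pos (Nat.cast_nonneg n) m; positivity

lemma e_anti (m n : ℕ) : 1 / P m ((n+1:ℕ):ℝ) ≤ 1 / P m (n:ℝ) := by
  have h1 := P_pos (Nat.cast_nonneg (α := ℝ) n) m
  have h2 := P_mono (Nat.cast_nonneg (α := ℝ) n) m
  have h3 : P m ((n+1:ℕ):ℝ) = P m ((n:ℝ)+1) := by push_cast; rfl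
  rw [h3]
  apply one_div_le_one_div_of_le h1 h2

lemma e_tendsto (k : ℕ) : Tendsto (fun n : ℕ => 1 / P (k+1) (n:ℝ)) atTop (nhds 0) := by
  apply squeeze_zero (fun n => e_nonneg _ n)
  · intro n
    have h1 : ((n:ℝ)+1) ≤ P (k+1) (n:ℝ) := by
      rw [P_succ']
      have := one_le_P (by positivity : (0:ℝ) ≤ (n:ℝ)+1) k
      nlinarith
    exact one_div_le_one_div_of_le (by positivity) h1
  · exact tendsto_one_div_add_atTop_nhds_zero_nat

lemma summable_e_tele (k : ℕ) :
    Summable (fun n : ℕ => 1 / P (k+1) (n:ℝ) - 1 / P (k+1) ((n:ℝ)+1)) := by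
  have := summable_tele (e := fun n : ℕ => 1 / P (k+1) (n:ℝ)) (fun n => e_nonneg _ n)
    (fun n => e_anti (k+1) n)
  apply this.congr
  intro n; push_cast; rfl

lemma summable_hh (k : ℕ) : Summable (hh (k+1)) := by
  have := (summable_e_tele k).mul_left (1/((k:ℝ)+1))
  apply this.congr
  intro n; rw [hh_tele]

lemma V_eq (k : ℕ) : ∑' n, hh (k+1) n = 1/(((k:ℝ)+1) * (Nat.factorial (k+1) : ℝ)) := by
  have h1 : ∑' n, hh (k+1) n
      = ∑' n : ℕ, (1/((k:ℝ)+1)) * (1 / P (k+1) (n:ℝ) - 1 / P (k+1) ((n:ℝ)+1)) := by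
    apply tsum_congr; intro n; rw [hh_tele]
  rw [h1, tsum_mul_left]
  have h2 : ∑' n : ℕ, (1 / P (k+1) (n:ℝ) - 1 / P (k+1) ((n:ℝ)+1)) = 1 / P (k+1) (0:ℝ) := by
    have hs : Summable fun n : ℕ => (fun j : ℕ => 1 / P (k+1) (j:ℝ)) n - (fun j : ℕ => 1 / P (k+1) (j:ℝ)) (n+1) := by
      apply (summable_e_tele k).congr; intro n; push_cast; rfl
    have h3 := tsum_telescope' hs (e_tendsto k)
    rw [show (1 / P (k+1) (0:ℝ)) = 1 / P (k+1) ((0:ℕ):ℝ) by norm_num, ← h3]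
    apply tsum_congr; intro n; push_cast; rfl
  rw [h2, P_zero_eq]
  rw [one_div, one_div, one_div, mul_inv]

lemma g_rec (m n : ℕ) : g (m+1) n = (1/((m:ℝ)+1)) * (g m n - hh (m+1) n) := by
  have hA : P (m+1) ((n:ℝ)+1) = P m ((n:ℝ)+1) * ((n:ℝ)+1+1+m) := P_succ m _
  have hPk : (0:ℝ) < P m ((n:ℝ)+1) := P_pos (by positivity) m
  unfold g hh
  rw [hA]
  field_simp
  ring

lemma U_eq (m : ℕ) : ∑' n, g m n
    = (1 / (Nat.factorial m : ℝ)) * (Z 2 - ∑ j ∈ Finset.Icc 1 m, (1 : ℝ) / (j : ℝ) ^ 2) := by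
  induction m with
  | zero =>
    simp only [Nat.factorial_zero, Nat.cast_one, Finset.Icc_self]
    rw [show Finset.Icc 1 0 = (∅ : Finset ℕ) by rfl]
    simp only [Finset.sum_empty, sub_zero, one_div, inv_one, one_mul]
    rw [Z]
    apply tsum_congr
    intro n
    simp [g, P]
  | succ m ih =>
    have h1 : ∑' n, g (m+1) n = ∑' n, (1/((m:ℝ)+1)) * (g m n - hh (m+1) n) := by
      apply tsum_congr; intro n; exact g_rec m n
    rw [h1, tsum_mul_left, Summable.tsum_sub (summable_g m) (summable_hh m), ih, V_eq]
    have hfac : ((Nat.factorial (m+1)):ℝ) = ((m:ℝ)+1) * (Nat.factorial m : ℝ) := by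
      push_cast [Nat.factorial_succ]; ring
    have hIcc : ∑ j ∈ Finset.Icc 1 (m+1), (1 : ℝ) / (j : ℝ) ^ 2
        = (∑ j ∈ Finset.Icc 1 m, (1 : ℝ) / (j : ℝ) ^ 2) + 1/((m:ℝ)+1)^2 := by
      rw [Finset.sum_Icc_succ_top (by omega : 1 ≤ m+1)]
      push_cast; ring_nf
    rw [hfac, hIcc]
    have hm : (0:ℝ) < (m:ℝ)+1 := by positivity
    have hf : (0:ℝ) < (Nat.factorial m : ℝ) := by positivity
    field_simp
    ring

lemma P_ge_lin (m n : ℕ) : (n:ℝ)+1 ≤ P (m+1) (n:ℝ) := by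
  rw [P_succ']
  have := one_le_P (by positivity : (0:ℝ) ≤ (n:ℝ)+1) m
  nlinarith

lemma P_ge_sq (m n : ℕ) : ((n:ℝ)+1)^2 ≤ P (m+2) (n:ℝ) := by
  rw [P_succ']
  have h := P_ge_lin m (n+1)
  have h2 : ((n+1:ℕ):ℝ) = (n:ℝ)+1 := by push_cast; ring
  rw [h2] at h
  nlinarith [Nat.cast_nonneg (α := ℝ) n]

lemma summable_orig (m : ℕ) : Summable (fun n : ℕ => H (n+1) 1 / P (m+2) (n:ℝ)) := by
  apply Summable.of_nonneg_of_le _ _ summable_sqrt_div_sq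
  · intro n
    have := P_pos (Nat.cast_nonneg (α := ℝ) n) (m+2)
    have := H_nonneg (n+1)
    positivity
  · intro n
    have hH : H (n+1) 1 ≤ 2 * Real.sqrt ((n:ℝ)+1) := by
      have := H_le_sqrt (n+1)
      have h2 : ((n+1:ℕ):ℝ) = (n:ℝ)+1 := by push_cast; ring
      rwa [h2] at this
    have hP := P_ge_sq m n
    have hP0 := P_pos (Nat.cast_nonneg (α := ℝ) n) (m+2)
    have hs : (0:ℝ) ≤ Real.sqrt ((n:ℝ)+1) := Real.sqrt_nonneg _
    apply div_le_div₀ (by positivity) hH (by positivity) hP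

noncomputable def cc (m n : ℕ) : ℝ := H (n+1) 1 * (1 / P (m+1) (n:ℝ))

lemma key_id (m n : ℕ) :
    H (n+1) 1 / P (m+2) (n:ℝ)
      = (1/((m:ℝ)+1)) * ((cc m n - cc m (n+1)) + g m (n+1)) := by
  set x := (n:ℝ) with hx
  have hcast : ((n+1:ℕ):ℝ) = x + 1 := by push_cast; ring
  have hP2 : P (m+2) x = (x+1) * P (m+1) (x+1) := P_succ' (m+1) x
  have hP1 : P (m+1) (x+1) = (x+1+1) * P m (x+1+1) := P_succ' m (x+1)
  have hPb : P (m+2) x = P (m+1) x * (x+1+((m+1:ℕ):ℝ)) := P_succ (m+1) x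
  have hH2 : H (n+2) 1 = H (n+1) 1 + 1/(x+1+1) := by
    have := H_succ (n+1)
    rwa [hcast] at this
  have ha : (0:ℝ) < P m (x+1+1) := P_pos (by positivity) m
  have hb : (0:ℝ) < P (m+1) x := P_pos (by positivity) (m+1)
  have hx1 : (0:ℝ) < x+1 := by positivity
  have hx2 : (0:ℝ) < x+1+1 := by positivity
  have hrel : P (m+1) x * (x+1+((m+1:ℕ):ℝ)) = (x+1) * ((x+1+1) * P m (x+1+1)) := by
    rw [← hPb, hP2, hP1]
  have hm2 : (0:ℝ) < x+1+((m+1:ℕ):ℝ) := by positivity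
  have hPx : P (m+1) x = (x+1) * ((x+1+1) * P m (x+1+1)) / (x+1+((m+1:ℕ):ℝ)) :=
    (eq_div_iff (ne_of_gt hm2)).mpr hrel
  unfold cc g
  rw [hcast, hP2, hP1, hH2, ← hx, hPx]
  push_cast
  field_simp
  ring

lemma cc_diff (m n : ℕ) :
    cc m n - cc m (n+1) = ((m:ℝ)+1) * (H (n+1) 1 / P (m+2) (n:ℝ)) - g m (n+1) := by
  have hm : ((m:ℝ)+1) ≠ 0 := by positivity
  rw [key_id m n]
  field_simp
  ring

lemma summable_cc_diff (m : ℕ) : Summable (fun n => cc m n - cc m (n+1)) := by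
  have h1 := (summable_orig m).mul_left ((m:ℝ)+1)
  have h2 : Summable (fun n : ℕ => g m (n+1)) := (summable_nat_add_iff 1).mpr (summable_g m)
  exact (h1.sub h2).congr (fun n => (cc_diff m n).symm)

lemma cc_tendsto (m : ℕ) : Tendsto (cc m) atTop (nhds 0) := by
  have hub : ∀ n : ℕ, cc m n ≤ 2 / Real.sqrt ((n:ℝ)+1) := by
    intro n
    have hH : H (n+1) 1 ≤ 2 * Real.sqrt ((n:ℝ)+1) := by
      have := H_le_sqrt (n+1)
      have h2 : ((n+1:ℕ):ℝ) = (n:ℝ)+1 := by push_cast; ring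
      rwa [h2] at this
    have hP := P_ge_lin m n
    have hP0 := P_pos (Nat.cast_nonneg (α := ℝ) n) (m+1)
    have hs : (0:ℝ) < Real.sqrt ((n:ℝ)+1) := Real.sqrt_pos.mpr (by positivity)
    have hss : Real.sqrt ((n:ℝ)+1) * Real.sqrt ((n:ℝ)+1) = (n:ℝ)+1 :=
      Real.mul_self_sqrt (by positivity)
    have h3 : cc m n ≤ 2 * Real.sqrt ((n:ℝ)+1) / ((n:ℝ)+1) := by
      unfold cc
      rw [mul_one_div]
      apply div_le_div₀ (by positivity) hH (by positivity) hP
    have h4 : 2 * Real.sqrt ((n:ℝ)+1) / ((n:ℝ)+1) = 2 / Real.sqrt ((n:ℝ)+1) := by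
      rw [div_eq_div_iff (by positivity) hs.ne']
      nlinarith
    linarith [h3, h4.le]
  have hlb : ∀ n : ℕ, 0 ≤ cc m n := by
    intro n
    have := P_pos (Nat.cast_nonneg (α := ℝ) n) (m+1)
    have := H_nonneg (n+1)
    unfold cc; positivity
  apply squeeze_zero hlb hub
  have h5 : Tendsto (fun n : ℕ => Real.sqrt ((n:ℝ)+1)) atTop atTop := by
    have hs2 : Tendsto (fun x : ℝ => x ^ ((1:ℝ)/2)) atTop atTop := tendsto_rpow_atTop (by norm_num)
    have hn : Tendsto (fun n : ℕ => (n:ℝ)+1) atTop atTop :=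
      tendsto_atTop_add_const_right _ 1 tendsto_natCast_atTop_atTop
    apply (hs2.comp hn).congr
    intro n
    simp [Real.sqrt_eq_rpow]
  have h6 := h5.inv_tendsto_atTop
  have h7 := h6.const_mul (2:ℝ)
  rw [mul_zero] at h7
  apply h7.congr
  intro n
  simp [div_eq_mul_inv]

theorem stmt19 (q : ℕ) (hq : 2 ≤ q) :
    ∑' n : ℕ, H (n + 1) 1 / (∏ i ∈ Finset.range q, ((n : ℝ) + 1 + i)) =
      (1 / (Nat.factorial (q - 1) : ℝ)) *
        (Z 2 - ∑ j ∈ Finset.Icc 1 (q - 2), (1 : ℝ) / (j : ℝ) ^ 2) := by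
  obtain ⟨m, rfl⟩ : ∃ m, q = m + 2 := ⟨q - 2, by omega⟩
  have hq1 : m + 2 - 1 = m + 1 := by omega
  have hq2 : m + 2 - 2 = m := by omega
  rw [hq1, hq2]
  have hgoal : (fun n : ℕ => H (n+1) 1 / (∏ i ∈ Finset.range (m+2), ((n : ℝ) + 1 + i)))
      = fun n : ℕ => H (n+1) 1 / P (m+2) (n:ℝ) := rfl
  rw [hgoal]
  have h1 : ∑' n : ℕ, H (n+1) 1 / P (m+2) (n:ℝ)
      = ∑' n : ℕ, (1/((m:ℝ)+1)) * ((cc m n - cc m (n+1)) + g m (n+1)) :=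
    tsum_congr (key_id m)
  have hSg : Summable (fun n : ℕ => g m (n+1)) := (summable_nat_add_iff 1).mpr (summable_g m)
  rw [h1, tsum_mul_left, Summable.tsum_add (summable_cc_diff m) hSg]
  have h2 : ∑' n, (cc m n - cc m (n+1)) = cc m 0 := tsum_telescope' (summable_cc_diff m) (cc_tendsto m)
  have hcc0 : cc m 0 = 1 / (Nat.factorial (m+1) : ℝ) := by
    unfold cc
    rw [H_one]
    norm_num
    rw [P_zero_eq]
  have h3 : ∑' n : ℕ, g m (n+1) = (∑' n, g m n) - g m 0 := by
    rw [Summable.tsum_eq_zero_add (summable_g m)]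
    ring
  have hg0 : g m 0 = 1 / (Nat.factorial (m+1) : ℝ) := by
    unfold g
    norm_num
    exact_mod_cast P_one_eq m
  rw [h2, hcc0, h3, hg0, U_eq m]
  have hfac : ((Nat.factorial (m+1)):ℝ) = ((m:ℝ)+1) * (Nat.factorial m : ℝ) := by
    push_cast [Nat.factorial_succ]; ring
  have hf : (0:ℝ) < (Nat.factorial m : ℝ) := by positivity
  have hm : (0:ℝ) < (m:ℝ)+1 := by positivity
  rw [hfac]
  field_simp
  ring
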